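/- Let n ≥ 1 and let A = (a_{ij}) be a real n×n matrix. Let (u_1,…,u_n) be a radial solution of the Liouville system on (0,∞) such that for each i: lim_{r→0+} r·u_i'(r) = 0 and r ↦ r·e^{u_i(r)} is integrable on (0,∞). Set m_i = ∫_0^∞ (∑_{j=1}^n a_{ij} e^{u_j(r)}) r dr. Assume there are constants c_1,…,c_n ∈ ℝ, exponents m_1,…,m_n with m := min_j m_j > 2, δ ∈ (0,1) and C₀ > 0 such that |e^{u_j(r)} − e^{c_j}·r^{−m_j}| ≤ C₀·r^{−m−δ} for all r ≥ 1 and all j. Then there exists C > 0 such that for all r ≥ 1 and all i: |u_i'(r) + m_i/r − ∑_{j=1}^n (a_{ij}·e^{c_j}/(m_j−2))·r^{1−m_j}| ≤ C·r^{1−m−δ}. -/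

import Mathlib

/-!
The radial equation says `(r u_i')' = -r F_i` with `F_i = ∑_j a_{ij} e^{u_j}`. Integrating from
`0`, where `r u_i'` vanishes, gives `r u_i'(r) = -m_i + ∫_r^∞ s F_i(s) ds`, so
`u_i'(r) + m_i / r` is `1/r` times the tail `∑_j a_{ij} ∫_r^∞ s e^{u_j}`. Inserting the
asymptotics `e^{u_j} ≈ e^{c_j} s^{-m_j}` into each tail integral gives the main term
`e^{c_j} r^{2-m_j} / (m_j - 2)` with an error of order `r^{2-m-δ}`.
-/

open MeasureTheory Filter

/-- `(u_1,…,u_n)` is a radial solution of the Liouville system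
`u_i'' + u_i'/r = -∑_j a_{ij} e^{u_j}` on the set `J ⊆ (0,∞)`. -/
def IsRadialSolution {n : ℕ} (A : Fin n → Fin n → ℝ) (u : Fin n → ℝ → ℝ) (J : Set ℝ) : Prop :=
  ∀ i : Fin n, ∀ r ∈ J,
    DifferentiableAt ℝ (u i) r ∧ DifferentiableAt ℝ (deriv (u i)) r ∧
    deriv (deriv (u i)) r + deriv (u i) r / r = -∑ j, A i j * Real.exp (u j r)

open Set Real Topology

lemma hasDerivAt_mul_deriv {w : ℝ → ℝ} {x : ℝ} (hx : x ≠ 0)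
    (hw' : DifferentiableAt ℝ (deriv w) x) :
    HasDerivAt (fun s => s * deriv w s) (x * (deriv (deriv w) x + deriv w x / x)) x := by
  refine ((hasDerivAt_id' x).mul hw'.hasDerivAt).congr_deriv ?_
  rw [mul_add, mul_div_cancel₀ _ hx]
  ring

lemma eq_integral_Ioi_sub_of_hasDerivAt_of_tendsto_zero {f f' : ℝ → ℝ} {r : ℝ} (hr : 0 < r)
    (hderiv : ∀ x ∈ Ioi 0, HasDerivAt f (f' x) x) (hint : IntegrableOn f' (Ioi 0))
    (hf0 : Tendsto f (𝓝[>] 0) (𝓝 0)) :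
    f r = (∫ x in Ioi 0, f' x) - ∫ x in Ioi r, f' x := by
  rw [intervalIntegral.integral_Ioi_sub_Ioi hint hr.le,
    intervalIntegral.integral_eq_sub_of_hasDerivAt_of_tendsto hr (fun x hx => hderiv x hx.1)
      ((intervalIntegrable_iff_integrableOn_Ioc_of_le hr.le).2
        (hint.mono_set Ioc_subset_Ioi_self))
      hf0 ((hderiv r hr).continuousAt.tendsto.mono_left nhdsWithin_le_nhds), sub_zero]

lemma integral_Ioi_rpow_one_sub {p r : ℝ} (hr : 0 < r) (hp : 2 < p) :
    ∫ s in Ioi r, s ^ (1 - p) = r ^ (2 - p) / (p - 2) := by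
  rw [integral_Ioi_rpow_of_lt (by linarith) hr, show 1 - p + 1 = -(p - 2) by ring,
    neg_div_neg_eq, show -(p - 2) = 2 - p by ring]

lemma abs_integral_Ioi_mul_sub_le {f : ℝ → ℝ} {a p q C r : ℝ} (hr : 0 < r) (hp : 2 < p)
    (hq : 2 < q) (hf : IntegrableOn (fun s => s * f s) (Ioi r))
    (hdec : ∀ s ∈ Ioi r, |f s - a * s ^ (-p)| ≤ C * s ^ (-q)) :
    |(∫ s in Ioi r, s * f s) - a * (r ^ (2 - p) / (p - 2))| ≤ C * (r ^ (2 - q) / (q - 2)) := by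
  have hpow : ∀ s ∈ Ioi r, ∀ e : ℝ, s * s ^ (-e) = s ^ (1 - e) := fun s hs e => by
    rw [sub_eq_add_neg, rpow_add (hr.trans hs), rpow_one]
  rw [← integral_Ioi_rpow_one_sub hr hp, ← integral_Ioi_rpow_one_sub hr hq,
    ← integral_const_mul, ← integral_const_mul,
    ← integral_sub hf ((integrableOn_Ioi_rpow_of_lt (by linarith) hr).const_mul a),
    ← Real.norm_eq_abs]
  refine norm_integral_le_of_norm_le
    ((integrableOn_Ioi_rpow_of_lt (by linarith) hr).const_mul C) ?_
  filter_upwards [ae_restrict_mem measurableSet_Ioi] with s hs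
  calc ‖s * f s - a * s ^ (1 - p)‖ = s * |f s - a * s ^ (-p)| := by
        rw [← hpow s hs, show s * f s - a * (s * s ^ (-p)) = s * (f s - a * s ^ (-p)) by ring,
          norm_mul, Real.norm_eq_abs, Real.norm_eq_abs, abs_of_pos (hr.trans hs)]
    _ ≤ s * (C * s ^ (-q)) := mul_le_mul_of_nonneg_left (hdec s hs) (hr.trans hs).le
    _ = C * s ^ (1 - q) := by rw [← hpow s hs]; ring

lemma abs_sum_mul_sub_sum_mul_le {ι : Type*} (s : Finset ι) (a x y : ι → ℝ) {ε : ℝ}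
    (hxy : ∀ j ∈ s, |x j - y j| ≤ ε) :
    |∑ j ∈ s, a j * x j - ∑ j ∈ s, a j * y j| ≤ (∑ j ∈ s, |a j|) * ε := by
  rw [← Finset.sum_sub_distrib, Finset.sum_mul]
  refine (Finset.abs_sum_le_sum_abs _ _).trans (Finset.sum_le_sum fun j hj => ?_)
  rw [← mul_sub, abs_mul]
  exact mul_le_mul_of_nonneg_left (hxy j hj) (abs_nonneg _)

namespace IsRadialSolution

variable {n : ℕ} {A : Fin n → Fin n → ℝ} {u : Fin n → ℝ → ℝ}

lemma hasDerivAt_mul_deriv {J : Set ℝ} (hsol : IsRadialSolution A u J) (i : Fin n) {x : ℝ}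
    (hxJ : x ∈ J) (hx : x ≠ 0) :
    HasDerivAt (fun s => s * deriv (u i) s) (-((∑ j, A i j * exp (u j x)) * x)) x := by
  obtain ⟨-, hu', hode⟩ := hsol i x hxJ
  refine (_root_.hasDerivAt_mul_deriv hx hu').congr_deriv ?_
  rw [hode]
  ring

lemma deriv_add_div_eq (hsol : IsRadialSolution A u (Ioi 0)) {i : Fin n}
    (hlim0 : Tendsto (fun r => r * deriv (u i) r) (𝓝[>] 0) (𝓝 0))
    (hint : ∀ j, IntegrableOn (fun r => r * exp (u j r)) (Ioi 0)) {r : ℝ} (hr : 0 < r) :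
    deriv (u i) r + (∫ s in Ioi 0, (∑ j, A i j * exp (u j s)) * s) / r
      = (∑ j, A i j * ∫ s in Ioi r, s * exp (u j s)) / r := by
  have hsum : (fun s => (∑ j, A i j * exp (u j s)) * s)
      = fun s => ∑ j, A i j * (s * exp (u j s)) := by
    ext s
    rw [Finset.sum_mul]
    exact Finset.sum_congr rfl fun j _ => by ring
  have hF : IntegrableOn (fun s => (∑ j, A i j * exp (u j s)) * s) (Ioi 0) := by
    rw [hsum]
    exact integrable_finsetSum _ fun j _ => (hint j).const_mul (A i j)
  have htail : ∫ s in Ioi r, (∑ j, A i j * exp (u j s)) * s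
      = ∑ j, A i j * ∫ s in Ioi r, s * exp (u j s) := by
    rw [hsum, integral_finsetSum _ fun j _ =>
      ((hint j).mono_set (Ioi_subset_Ioi hr.le)).const_mul (A i j)]
    simp only [integral_const_mul]
  have hrd := eq_integral_Ioi_sub_of_hasDerivAt_of_tendsto_zero hr
    (fun x hx => hsol.hasDerivAt_mul_deriv i hx (ne_of_gt hx)) hF.neg hlim0
  rw [integral_neg, integral_neg, htail] at hrd
  field_simp
  linarith

end IsRadialSolution

theorem radial_derivative_expansion_general
    (n : ℕ) (A : Fin n → Fin n → ℝ) (u : Fin n → ℝ → ℝ)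
    (hsol : IsRadialSolution A u (Set.Ioi 0))
    (hlim0 : ∀ i, Tendsto (fun r => r * deriv (u i) r) (nhdsWithin 0 (Set.Ioi 0)) (nhds 0))
    (hint : ∀ i, IntegrableOn (fun r => r * Real.exp (u i r)) (Set.Ioi 0))
    (mi : Fin n → ℝ)
    (hmi : ∀ i, mi i = ∫ r in Set.Ioi (0:ℝ), (∑ j, A i j * Real.exp (u j r)) * r)
    (c : Fin n → ℝ) (m : ℝ) (hm_le : ∀ j, m ≤ mi j) (hm2 : 2 < m)
    (δ C₀ : ℝ) (hδ : δ ∈ Set.Ioo (0:ℝ) 1)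
    (hdecay : ∀ j, ∀ r : ℝ, 1 ≤ r →
      |Real.exp (u j r) - Real.exp (c j) * r ^ (-mi j)| ≤ C₀ * r ^ (-m - δ)) :
    ∃ C > (0:ℝ), ∀ r : ℝ, 1 ≤ r → ∀ i,
      |deriv (u i) r + mi i / r -
          ∑ j, (A i j * Real.exp (c j) / (mi j - 2)) * r ^ (1 - mi j)|
        ≤ C * r ^ (1 - m - δ) := by
  set K := C₀ / (m + δ - 2)
  refine ⟨(∑ i, ∑ j, |A i j|) * |K| + 1, by positivity, fun r hr i => ?_⟩
  have hr0 : 0 < r := by linarith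
  have htail : ∀ j ∈ Finset.univ, |(∫ s in Ioi r, s * exp (u j s))
      - exp (c j) * (r ^ (2 - mi j) / (mi j - 2))| ≤ K * r ^ (1 - m - δ) * r := fun j _ => by
    convert abs_integral_Ioi_mul_sub_le (q := m + δ) hr0 (hm2.trans_le (hm_le j)) (by linarith [hδ.1])
      ((hint j).mono_set (Ioi_subset_Ioi hr0.le))
      fun s hs => by simpa only [neg_add'] using hdecay j s (hr.trans hs.le) using 1
    rw [show 2 - (m + δ) = 1 - m - δ + 1 by ring, rpow_add_one hr0.ne']
    ring
  have hmain : ∑ j, (A i j * exp (c j) / (mi j - 2)) * r ^ (1 - mi j)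
      = (∑ j, A i j * (exp (c j) * (r ^ (2 - mi j) / (mi j - 2)))) / r := by
    rw [Finset.sum_div]
    refine Finset.sum_congr rfl fun j _ => ?_
    rw [show 1 - mi j = 2 - mi j - 1 by ring, rpow_sub_one hr0.ne']
    ring
  rw [hmi i, hsol.deriv_add_div_eq (hlim0 i) hint hr0, hmain, ← sub_div, abs_div,
    abs_of_pos hr0, div_le_iff₀ hr0]
  refine (abs_sum_mul_sub_sum_mul_le _ _ _ _ htail).trans ?_
  have hrow : ∑ j, |A i j| ≤ ∑ i, ∑ j, |A i j| :=
    Finset.single_le_sum (f := fun i => ∑ j, |A i j|)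
      (fun i _ => Finset.sum_nonneg fun j _ => abs_nonneg _) (Finset.mem_univ i)
  rw [← mul_assoc, ← mul_assoc]
  gcongr
  calc (∑ j, |A i j|) * K ≤ (∑ j, |A i j|) * |K| := by gcongr; exact le_abs_self K
    _ ≤ (∑ i, ∑ j, |A i j|) * |K| := by gcongr
    _ ≤ _ := le_add_of_nonneg_right zero_le_one

theorem radial_derivative_expansion
    (n : ℕ) (hn : 1 ≤ n) (A : Fin n → Fin n → ℝ) (u : Fin n → ℝ → ℝ)
    (hsol : IsRadialSolution A u (Set.Ioi 0))
    (hlim0 : ∀ i, Tendsto (fun r => r * deriv (u i) r) (nhdsWithin 0 (Set.Ioi 0)) (nhds 0))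
    (hint : ∀ i, IntegrableOn (fun r => r * Real.exp (u i r)) (Set.Ioi 0))
    (mi : Fin n → ℝ)
    (hmi : ∀ i, mi i = ∫ r in Set.Ioi (0:ℝ), (∑ j, A i j * Real.exp (u j r)) * r)
    (c : Fin n → ℝ) (m : ℝ) (hm_le : ∀ j, m ≤ mi j) (hm_min : ∃ j, mi j = m) (hm2 : 2 < m)
    (δ C₀ : ℝ) (hδ : δ ∈ Set.Ioo (0:ℝ) 1) (hC₀ : 0 < C₀)
    (hdecay : ∀ j, ∀ r : ℝ, 1 ≤ r →
      |Real.exp (u j r) - Real.exp (c j) * r ^ (-mi j)| ≤ C₀ * r ^ (-m - δ)) :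
    ∃ C > (0:ℝ), ∀ r : ℝ, 1 ≤ r → ∀ i,
      |deriv (u i) r + mi i / r -
          ∑ j, (A i j * Real.exp (c j) / (mi j - 2)) * r ^ (1 - mi j)|
        ≤ C * r ^ (1 - m - δ) :=
  radial_derivative_expansion_general n A u hsol hlim0 hint mi hmi c m hm_le hm2 δ C₀ hδ hdecay
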